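/- arXiv:0905.2708 — 5 statements merged into one kernel-verified Lean document; each statement's English description precedes it below -/
import Mathlib

section
/- If φ: Mₙ(ℂ) → Mₙ(ℂ) is a linear map with no negative eigenvalues such that φ(I + tφ)⁻¹ is completely positive for all t ≥ 0, then for every s ≥ 0 the map φ^(s) := φ(I + sφ)⁻¹ also has this property; i.e., φ^(s)(I + t φ^(s))⁻¹ is completely positive for all t ≥ 0. Moreover φ^(s)(I + t φ^(s))⁻¹ = φ(I + (s+t)φ)⁻¹. -/
open scoped ComplexOrder BigOperators
open Matrix

abbrev MatC (n : ℕ) := Matrix (Fin n) (Fin n) ℂ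

/-- Complete positivity of a linear map on `Mₙ(ℂ)`:
for all finite families `Aᵢ`, `fᵢ`, `∑ ⟨fᵢ, φ(Aᵢ* Aⱼ) fⱼ⟩ ≥ 0`. -/
def IsCP {n : ℕ} (φ : Module.End ℂ (MatC n)) : Prop :=
  ∀ (m : ℕ) (A : Fin m → MatC n) (f : Fin m → (Fin n → ℂ)),
    0 ≤ ∑ i, ∑ j, star (f i) ⬝ᵥ ((φ ((A i)ᴴ * A j)) *ᵥ f j)

/-- `φ` has no negative (real) eigenvalues. -/
def NoNegEig {n : ℕ} (φ : Module.End ℂ (MatC n)) : Prop :=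
  ∀ r : ℝ, r < 0 → ¬ Module.End.HasEigenvalue φ (r : ℂ)

/-- `φ^(t) = φ ∘ (I + t φ)⁻¹`. -/
noncomputable def qRes {n : ℕ} (φ : Module.End ℂ (MatC n)) (t : ℝ) :
    Module.End ℂ (MatC n) :=
  φ * Ring.inverse (1 + (t : ℂ) • φ)

/-- `φ` is q-positive. -/
def IsQPos {n : ℕ} (φ : Module.End ℂ (MatC n)) : Prop :=
  NoNegEig φ ∧ ∀ t : ℝ, 0 ≤ t → IsCP (qRes φ t)

/-- `φ ≥_q ψ` : `φ(I+tφ)⁻¹ − ψ(I+tψ)⁻¹` is completely positive for all `t ≥ 0`. -/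
def qLE {n : ℕ} (ψ φ : Module.End ℂ (MatC n)) : Prop :=
  ∀ t : ℝ, 0 ≤ t → IsCP (qRes φ t - qRes ψ t)

/-- `φ` is q-pure: its q-subordinates are exactly `{0} ∪ {φ^(s) : s ≥ 0}`. -/
def IsQPure {n : ℕ} (φ : Module.End ℂ (MatC n)) : Prop :=
  IsQPos φ ∧ ∀ ψ : Module.End ℂ (MatC n),
    (IsQPos ψ ∧ qLE ψ φ) ↔ (ψ = 0 ∨ ∃ s : ℝ, 0 ≤ s ∧ ψ = qRes φ s)

/-!
The resolvent-type maps `φ^(s) = φ(1 + sφ)⁻¹` form a semigroup under `(φ^(s))^(t) = φ^(s+t)`: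
writing `u = 1 + sφ`, one has `1 + t φ u⁻¹ = (1 + (s+t)φ) u⁻¹`, so
`φ u⁻¹ (1 + tφu⁻¹)⁻¹ = φ (1 + (s+t)φ)⁻¹`.
Hence the complete positivity of `(φ^(s))^(t)` is that of `φ^(s+t)`. The absence of negative
eigenvalues is exactly what makes every `1 + sφ`, `s ≥ 0`, invertible.
-/

theorem Module.End.isUnit_one_add_smul_of_not_hasEigenvalue {K V : Type*} [Field K]
    [AddCommGroup V] [Module K V] [FiniteDimensional K V] (f : Module.End K V) {c : K}
    (hc : c ≠ 0) (hf : ¬ f.HasEigenvalue (-c⁻¹)) : IsUnit (1 + c • f) := by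
  rw [Module.End.hasEigenvalue_iff_mem_spectrum, spectrum.mem_iff, not_not] at hf
  have hfactor :
      1 + c • f = algebraMap K (Module.End K V) (-c) * (algebraMap K _ (-c⁻¹) - f) := by
    rw [mul_sub, ← map_mul, neg_mul_neg, mul_inv_cancel₀ hc, map_one,
      Algebra.algebraMap_eq_smul_one, smul_mul_assoc, one_mul, neg_smul, sub_neg_eq_add]
  rw [hfactor]
  exact ((IsUnit.mk0 _ (neg_ne_zero.mpr hc)).map _).mul hf

theorem isUnit_one_add_smul_of_noNegEig {n : ℕ} {φ : Module.End ℂ (MatC n)} (hφ : NoNegEig φ)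
    {s : ℝ} (hs : 0 ≤ s) : IsUnit (1 + (s : ℂ) • φ) := by
  rcases hs.eq_or_lt with rfl | hs
  · simp
  · refine φ.isUnit_one_add_smul_of_not_hasEigenvalue (by exact_mod_cast hs.ne') ?_
    exact_mod_cast hφ (-s⁻¹) (by simpa using hs)

theorem mul_inverse_one_add_smul_mul_mul_inverse {R A : Type*} [CommSemiring R] [Ring A]
    [Algebra R A] (a : A) {s t : R} (hs : IsUnit (1 + s • a)) (hst : IsUnit (1 + (s + t) • a)) :
    a * Ring.inverse (1 + s • a) * Ring.inverse (1 + t • (a * Ring.inverse (1 + s • a))) =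
      a * Ring.inverse (1 + (s + t) • a) := by
  obtain ⟨u, hu⟩ := hs
  obtain ⟨v, hv⟩ := hst
  have hfactor : 1 + t • (a * Ring.inverse (1 + s • a)) = ↑(v * u⁻¹) := by
    rw [Units.val_mul, hv, ← hu, Ring.inverse_unit, add_smul, ← add_assoc, ← hu, add_mul,
      u.mul_inv, smul_mul_assoc]
  rw [hfactor, Ring.inverse_unit, ← hu, ← hv, Ring.inverse_unit, Ring.inverse_unit,
    _root_.mul_inv_rev, inv_inv, Units.val_mul, mul_assoc, u.inv_mul_cancel_left]

theorem qRes_qRes {n : ℕ} {φ : Module.End ℂ (MatC n)} (hφ : NoNegEig φ) {s t : ℝ} (hs : 0 ≤ s)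
    (ht : 0 ≤ t) : qRes (qRes φ s) t = qRes φ (s + t) := by
  have hst := isUnit_one_add_smul_of_noNegEig hφ (add_nonneg hs ht)
  push_cast at hst
  simp only [qRes, Complex.ofReal_add]
  exact mul_inverse_one_add_smul_mul_mul_inverse φ (isUnit_one_add_smul_of_noNegEig hφ hs) hst

/-- If `φ` has no negative eigenvalues and `φ(I+tφ)⁻¹` is CP for all `t ≥ 0`,
then for every `s ≥ 0` so does `φ^(s) = φ(I+sφ)⁻¹`, and moreover
`φ^(s)(I + t φ^(s))⁻¹ = φ(I + (s+t)φ)⁻¹`. -/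
theorem stmt0 {n : ℕ} (φ : Module.End ℂ (MatC n))
    (h1 : NoNegEig φ) (h2 : ∀ t : ℝ, 0 ≤ t → IsCP (qRes φ t)) :
    ∀ s : ℝ, 0 ≤ s →
      (∀ t : ℝ, 0 ≤ t → IsCP (qRes (qRes φ s) t)) ∧
      (∀ t : ℝ, 0 ≤ t → qRes (qRes φ s) t = qRes φ (s + t)) := by
  intro s hs
  refine ⟨fun t ht => ?_, fun t ht => qRes_qRes h1 hs ht⟩
  rw [qRes_qRes h1 hs ht]
  exact h2 (s + t) (add_nonneg hs ht)
end

section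
/- Let ρ be a state on Mₙ(ℂ) and define φ(A) = ρ(A)·I. Then φ is q-positive, and φ(I + tφ)⁻¹ = (1/(1+t))·φ for all t ≥ 0. -/
/-! Since `ρ 1 = 1`, the map `φ = ρ(·) • 1` is idempotent. Hence `1 + tφ` is invertible with inverse
`1 - (t / (1 + t)) φ`, which gives `φ (1 + tφ)⁻¹ = (1 + t)⁻¹ φ`, and the spectrum of `φ` lies in `{0, 1}`.
Complete positivity of `φ` reduces to positivity of `ρ`: the sum `∑ᵢⱼ ⟨fᵢ, φ(Aᵢᴴ Aⱼ) fⱼ⟩` is `ρ` of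
`∑ᵢⱼ ⟨fᵢ, fⱼ⟩ Aᵢᴴ Aⱼ = ∑_κ Bκᴴ Bκ` with `Bκ = ∑ⱼ fⱼ(κ) Aⱼ`. -/

open scoped ComplexOrder BigOperators
open Matrix

namespace IsIdempotentElem

variable {K A : Type*} [Field K] [Ring A] [Algebra K A] {p : A}

lemma one_add_smul_mul_one_sub_smul (hp : IsIdempotentElem p) (x y : K) :
    (1 + x • p) * (1 - y • p) = 1 + (x - y - x * y) • p := by
  simp only [mul_sub, add_mul, one_mul, mul_one, smul_mul_smul_comm, hp.eq]
  module

lemma one_sub_smul_mul_one_add_smul (hp : IsIdempotentElem p) (x y : K) :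
    (1 - y • p) * (1 + x • p) = 1 + (x - y - x * y) • p := by
  simp only [sub_mul, mul_add, one_mul, mul_one, smul_mul_smul_comm, hp.eq]
  module

lemma ring_inverse_one_add_smul (hp : IsIdempotentElem p) {t : K} (ht : 1 + t ≠ 0) :
    Ring.inverse (1 + t • p) = 1 - (t / (1 + t)) • p := by
  have hcoeff : t - t / (1 + t) - t * (t / (1 + t)) = 0 := by
    field_simp
    ring
  refine Ring.inverse_unit ⟨1 + t • p, 1 - (t / (1 + t)) • p, ?_, ?_⟩
  · rw [one_add_smul_mul_one_sub_smul hp, hcoeff, zero_smul, add_zero]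
  · rw [one_sub_smul_mul_one_add_smul hp, hcoeff, zero_smul, add_zero]

lemma mul_ring_inverse_one_add_smul (hp : IsIdempotentElem p) {t : K} (ht : 1 + t ≠ 0) :
    p * Ring.inverse (1 + t • p) = (1 + t)⁻¹ • p := by
  have hcoeff : (1 + t)⁻¹ = 1 - t / (1 + t) := by
    field_simp
    ring
  rw [ring_inverse_one_add_smul hp ht, mul_sub, mul_one, mul_smul_comm, hp.eq, hcoeff,
    sub_smul, one_smul]

lemma eq_zero_or_one_of_hasEigenvalue {V : Type*} [AddCommGroup V] [Module K V]
    {f : Module.End K V} (hf : IsIdempotentElem f) {μ : K} (hμ : f.HasEigenvalue μ) :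
    μ = 0 ∨ μ = 1 :=
  hf.spectrum_subset K hμ.mem_spectrum

end IsIdempotentElem

lemma LinearMap.isIdempotentElem_smulRight {R M : Type*} [CommSemiring R] [AddCommMonoid M]
    [Module R M] (f : M →ₗ[R] R) {x : M} (hx : f x = 1) :
    IsIdempotentElem (f.smulRight x) := by
  ext m
  simp [Module.End.mul_apply, hx]

lemma Matrix.posSemidef_sum_dotProduct_smul_conjTranspose_mul
    {ι k l p R : Type*} [Fintype ι] [Fintype k] [Fintype l] [Fintype p]
    [CommRing R] [PartialOrder R] [StarRing R] [StarOrderedRing R]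
    (A : ι → Matrix l p R) (f : ι → k → R) :
    (∑ i, ∑ j, (star (f i) ⬝ᵥ f j) • ((A i)ᴴ * A j)).PosSemidef := by
  set B : k → Matrix l p R := fun κ => ∑ j, f j κ • A j
  have hB : ∑ i, ∑ j, (star (f i) ⬝ᵥ f j) • ((A i)ᴴ * A j) = ∑ κ, (B κ)ᴴ * B κ := by
    simp only [B, conjTranspose_sum, conjTranspose_smul, Matrix.sum_mul, Matrix.mul_sum,
      Matrix.smul_mul, Matrix.mul_smul, Finset.smul_sum, smul_smul, dotProduct, Finset.sum_smul,
      Pi.star_apply]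
    rw [Finset.sum_comm_cycle]
    refine Finset.sum_congr rfl fun κ _ => Finset.sum_comm.trans ?_
    simp only [mul_comm]
  rw [hB]
  exact posSemidef_sum Finset.univ fun κ _ => posSemidef_conjTranspose_mul_self (B κ)

lemma IsCP.real_smul {n : ℕ} {φ : Module.End ℂ (MatC n)} (hφ : IsCP φ) {c : ℝ} (hc : 0 ≤ c) :
    IsCP ((c : ℂ) • φ) := by
  intro m A f
  have hsum : ∑ i, ∑ j, star (f i) ⬝ᵥ (((c : ℂ) • φ) ((A i)ᴴ * A j) *ᵥ f j)
      = c * ∑ i, ∑ j, star (f i) ⬝ᵥ (φ ((A i)ᴴ * A j) *ᵥ f j) := by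
    simp only [LinearMap.smul_apply, smul_mulVec, dotProduct_smul, smul_eq_mul, Finset.mul_sum]
  rw [hsum]
  exact mul_nonneg (Complex.zero_le_real.mpr hc) (hφ m A f)

lemma isCP_smulRight_one {n : ℕ} {ρ : MatC n →ₗ[ℂ] ℂ}
    (hpos : ∀ A : MatC n, A.PosSemidef → 0 ≤ ρ A) : IsCP (ρ.smulRight (1 : MatC n)) := by
  intro m A f
  have hsum : ∑ i, ∑ j, star (f i) ⬝ᵥ ((ρ.smulRight (1 : MatC n)) ((A i)ᴴ * A j) *ᵥ f j)
      = ρ (∑ i, ∑ j, (star (f i) ⬝ᵥ f j) • ((A i)ᴴ * A j)) := by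
    simp only [LinearMap.smulRight_apply, smul_mulVec, one_mulVec, dotProduct_smul, map_sum,
      map_smul, smul_eq_mul, mul_comm]
  rw [hsum]
  exact hpos _ (posSemidef_sum_dotProduct_smul_conjTranspose_mul A f)

lemma qRes_of_isIdempotentElem {n : ℕ} {φ : Module.End ℂ (MatC n)} (hφ : IsIdempotentElem φ)
    {t : ℝ} (ht : 0 ≤ t) : qRes φ t = ((1 / (1 + t) : ℝ) : ℂ) • φ := by
  have ht' : 1 + (t : ℂ) ≠ 0 := by exact_mod_cast (by positivity : 1 + t ≠ 0)
  rw [qRes, hφ.mul_ring_inverse_one_add_smul ht']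
  push_cast
  rw [one_div]

/-- For a state `ρ` on `Mₙ(ℂ)`, the map `φ(A) = ρ(A)·I` is q-positive and
`φ(I+tφ)⁻¹ = (1/(1+t))·φ` for all `t ≥ 0`. -/
theorem stmt2 {n : ℕ} (ρ : MatC n →ₗ[ℂ] ℂ)
    (hpos : ∀ A : MatC n, A.PosSemidef → 0 ≤ ρ A) (hone : ρ 1 = 1) :
    IsQPos (ρ.smulRight (1 : MatC n)) ∧
    ∀ t : ℝ, 0 ≤ t →
      qRes (ρ.smulRight (1 : MatC n)) t
        = ((1 / (1 + t) : ℝ) : ℂ) • (ρ.smulRight (1 : MatC n) : Module.End ℂ (MatC n)) := by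
  have hidem : IsIdempotentElem (ρ.smulRight (1 : MatC n)) := ρ.isIdempotentElem_smulRight hone
  refine ⟨⟨fun r hr heig => ?_, fun t ht => ?_⟩, fun t ht => qRes_of_isIdempotentElem hidem ht⟩
  · rcases hidem.eq_zero_or_one_of_hasEigenvalue heig with h | h <;> norm_cast at h <;> linarith
  · rw [qRes_of_isIdempotentElem hidem ht]
    exact (isCP_smulRight_one hpos).real_smul (by positivity)
end

section
/- For a non-zero positive linear functional τ on Mₙ(ℂ) and non-zero positive C ∈ Mₙ(ℂ), the map ψ(A) = τ(A)C satisfies ψ(I + tψ)⁻¹(A) = τ(A)C / (1 + t·τ(C)) for all t ≥ 0 and A ∈ Mₙ(ℂ); in particular ψ is q-positive. -/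
/-!
The map `ψ = τ(·) C` has rank one and satisfies `ψ² = τ(C) ψ`. Hence `1 + t ψ` is inverted by
`1 - t (1 + t τ(C))⁻¹ ψ`, and `ψ (1 + t ψ)⁻¹ = (1 + t τ(C))⁻¹ ψ` is a nonnegative multiple of `ψ`.
The map `ψ` is completely positive: writing `C = B* B`, the defining sum becomes
`∑ₖ τ(Xₖ* Xₖ)` with `Xₖ = ∑ᵢ (B fᵢ)ₖ Aᵢ`. Finally, a nonzero eigenvalue of a rank-one map
`v ↦ f(v) x` can only be `f(x)`, here `τ(C) ≥ 0`.
-/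

open scoped ComplexOrder BigOperators
open Matrix

section RankOne

variable {K V : Type*} [Field K] [AddCommGroup V] [Module K V]

theorem LinearMap.smulRight_mul_self (f : V →ₗ[K] K) (x : V) :
    f.smulRight x * f.smulRight x = f x • f.smulRight x := by
  ext v
  simp only [Module.End.mul_apply, LinearMap.smulRight_apply, LinearMap.smul_apply,
    map_smul, smul_smul, mul_comm]

theorem LinearMap.eq_apply_of_hasEigenvalue_smulRight {f : V →ₗ[K] K} {x : V} {μ : K}
    (hμ : Module.End.HasEigenvalue (f.smulRight x) μ) (hμ0 : μ ≠ 0) : μ = f x := by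
  obtain ⟨v, hv⟩ := hμ.exists_hasEigenvector
  have hfx : f v • x = μ • v := hv.apply_eq_smul
  have hfv : f v ≠ 0 := by
    intro h
    rw [h, zero_smul, eq_comm, smul_eq_zero] at hfx
    exact hfx.elim hμ0 hv.2
  have : f v * f x = μ * f v := by simpa only [map_smul, smul_eq_mul] using congrArg f hfx
  exact mul_left_cancel₀ hfv (by rw [this, mul_comm])

end RankOne

section MulSelfEqSMul

variable {K A : Type*} [Field K] [Ring A] [Algebra K A] {ψ : A} {c : K}

theorem one_add_smul_mul_one_add_smul_of_mul_self_eq_smul (hψ : ψ * ψ = c • ψ) (a b : K) :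
    (1 + a • ψ) * (1 + b • ψ) = 1 + (a + b + a * b * c) • ψ := by
  simp only [mul_add, add_mul, mul_one, one_mul, smul_mul_smul, hψ, smul_smul, add_smul]
  abel

theorem mul_ringInverse_one_add_smul_of_mul_self_eq_smul (hψ : ψ * ψ = c • ψ) {t : K}
    (hd : 1 + t * c ≠ 0) : ψ * Ring.inverse (1 + t • ψ) = (1 + t * c)⁻¹ • ψ := by
  set s := -(t * (1 + t * c)⁻¹)
  have hs : t + s + t * s * c = 0 := by
    simp only [s]; field_simp; ring
  have hs' : s + t + s * t * c = 0 := by linear_combination hs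
  have hmul := one_add_smul_mul_one_add_smul_of_mul_self_eq_smul hψ
  have hinv : Ring.inverse (1 + t • ψ) = 1 + s • ψ := Ring.inverse_unit
    ⟨1 + t • ψ, 1 + s • ψ, by rw [hmul, hs, zero_smul, add_zero],
      by rw [hmul, hs', zero_smul, add_zero]⟩
  rw [hinv, mul_add, mul_one, mul_smul_comm, hψ, smul_smul]
  match_scalars
  simp only [s]; field_simp; ring

end MulSelfEqSMul

theorem Matrix.map_conjTranspose_sum_smul_mul_sum_smul {ι m 𝕜 : Type*} [Fintype ι] [Fintype m]
    [CommRing 𝕜] [StarRing 𝕜] (τ : Matrix ι ι 𝕜 →ₗ[𝕜] 𝕜) (v : m → 𝕜) (A : m → Matrix ι ι 𝕜) :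
    τ ((∑ i, v i • A i)ᴴ * ∑ j, v j • A j) = ∑ i, ∑ j, star (v i) * v j * τ ((A i)ᴴ * A j) := by
  simp only [conjTranspose_sum, conjTranspose_smul, Finset.sum_mul_sum, smul_mul_smul_comm,
    map_sum, map_smul, smul_eq_mul]

theorem IsCP.smul {n : ℕ} {φ : Module.End ℂ (MatC n)} (hφ : IsCP φ) {c : ℂ} (hc : 0 ≤ c) :
    IsCP (c • φ) := by
  intro m A f
  simpa only [LinearMap.smul_apply, smul_mulVec, dotProduct_smul, smul_eq_mul, ← Finset.mul_sum]
    using mul_nonneg hc (hφ m A f)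

theorem isCP_smulRight {n : ℕ} {τ : MatC n →ₗ[ℂ] ℂ} (hτ : ∀ A : MatC n, A.PosSemidef → 0 ≤ τ A)
    {C : MatC n} (hC : C.PosSemidef) : IsCP (τ.smulRight C) := by
  intro m A f
  obtain ⟨B, rfl⟩ : ∃ B : MatC n, C = star B * B := by
    open scoped MatrixOrder in
    exact CStarAlgebra.nonneg_iff_eq_star_mul_self.mp hC.nonneg
  set g : Fin m → Fin n → ℂ := fun i => B *ᵥ f i
  have hterm : ∀ i j, star (f i) ⬝ᵥ (τ.smulRight (star B * B) ((A i)ᴴ * A j) *ᵥ f j) =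
      ∑ k, star (g i k) * g j k * τ ((A i)ᴴ * A j) := by
    intro i j
    rw [LinearMap.smulRight_apply, smul_mulVec, dotProduct_smul, ← mulVec_mulVec,
      dotProduct_mulVec, star_eq_conjTranspose, vecMul_conjTranspose, star_star, smul_eq_mul,
      dotProduct, Finset.mul_sum]
    exact Finset.sum_congr rfl fun k _ => by simp only [Pi.star_apply, g]; ring
  calc 0 ≤ ∑ k, τ ((∑ i, g i k • A i)ᴴ * ∑ j, g j k • A j) :=
        Finset.sum_nonneg fun k _ => hτ _ (posSemidef_conjTranspose_mul_self _)
    _ = _ := by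
        simp only [map_conjTranspose_sum_smul_mul_sum_smul, hterm]
        rw [Finset.sum_comm]
        exact Finset.sum_congr rfl fun i _ => Finset.sum_comm

theorem qRes_smulRight {n : ℕ} (τ : MatC n →ₗ[ℂ] ℂ) (C : MatC n) {t : ℝ}
    (ht : 1 + (t : ℂ) * τ C ≠ 0) :
    qRes (τ.smulRight C) t = (1 + (t : ℂ) * τ C)⁻¹ • τ.smulRight C :=
  mul_ringInverse_one_add_smul_of_mul_self_eq_smul (τ.smulRight_mul_self C) ht

theorem stmt4_general {n : ℕ} (τ : MatC n →ₗ[ℂ] ℂ) (C : MatC n)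
    (hτpos : ∀ A : MatC n, A.PosSemidef → 0 ≤ τ A)
    (hC : C.PosSemidef) :
    (∀ t : ℝ, 0 ≤ t → ∀ A : MatC n,
      qRes (τ.smulRight C) t A = (τ A / (1 + (t : ℂ) * τ C)) • C) ∧
    IsQPos (τ.smulRight C) := by
  have hτC : 0 ≤ τ C := hτpos C hC
  have hd : ∀ t : ℝ, 0 ≤ t → 0 < 1 + (t : ℂ) * τ C := fun t ht =>
    add_pos_of_pos_of_nonneg one_pos (mul_nonneg (Complex.zero_le_real.2 ht) hτC)
  refine ⟨fun t ht A => ?_, fun r hr hev => ?_, fun t ht => ?_⟩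
  · rw [qRes_smulRight τ C (hd t ht).ne', LinearMap.smul_apply, LinearMap.smulRight_apply,
      smul_smul, div_eq_inv_mul]
  · have hτC_eq := τ.eq_apply_of_hasEigenvalue_smulRight hev (by exact_mod_cast hr.ne)
    rw [← hτC_eq, Complex.zero_le_real] at hτC
    exact hr.not_ge hτC
  · rw [qRes_smulRight τ C (hd t ht).ne']
    exact (isCP_smulRight hτpos hC).smul (inv_nonneg.2 (hd t ht).le)

/-- For a non-zero positive functional `τ` and non-zero positive `C`, the map
`ψ(A) = τ(A)C` satisfies `ψ(I+tψ)⁻¹(A) = τ(A)C/(1+t·τ(C))`; in particular `ψ` is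
q-positive. -/
theorem stmt4 {n : ℕ} (τ : MatC n →ₗ[ℂ] ℂ) (C : MatC n)
    (hτpos : ∀ A : MatC n, A.PosSemidef → 0 ≤ τ A) (hτne : τ ≠ 0)
    (hC : C.PosSemidef) (hCne : C ≠ 0) :
    (∀ t : ℝ, 0 ≤ t → ∀ A : MatC n,
      qRes (τ.smulRight C) t A = (τ A / (1 + (t : ℂ) * τ C)) • C) ∧
    IsQPos (τ.smulRight C) :=
  stmt4_general τ C hτpos hC
end

section
/- Let φ: Mₙ(ℂ) → Mₙ(ℂ) be q-positive and U ∈ Mₙ(ℂ) unitary. Define φ_U(A) = U* φ(U A U*) U. Then φ_U is q-positive, and the map β ↦ β_U is an order isomorphism (with respect to ≥_q) between the q-subordinates of φ and the q-subordinates of φ_U. In particular, φ is q-pure if and only if φ_U is q-pure. -/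
/-!
For unitary `U`, `conjEnd U` is the algebra automorphism of `Module.End ℂ (MatC n)` induced by
the linear automorphism `A ↦ Uᴴ A U` of `MatC n`. Algebra automorphisms commute with
`Ring.inverse`, hence with the maps `qRes`, and preserve spectra, hence the absence of negative
eigenvalues. Complete positivity is preserved by `conjEnd U` for every matrix `U` (replace `Aᵢ` by
`Aᵢ Uᴴ` and `fᵢ` by `U fᵢ`), and for unitary `U` the automorphism is undone by `conjEnd Uᴴ`.
So q-positivity, `≥_q` and q-purity are all transported by `conjEnd U`.
-/

open scoped ComplexOrder BigOperators
open Matrix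

/-- `φ_U(A) = U* φ(U A U*) U`. -/
noncomputable def conjEnd {n : ℕ} (U : MatC n) (φ : Module.End ℂ (MatC n)) :
    Module.End ℂ (MatC n) :=
  ((LinearMap.mulLeft ℂ Uᴴ * LinearMap.mulRight ℂ U : Module.End ℂ (MatC n)) * φ) *
    (LinearMap.mulLeft ℂ U * LinearMap.mulRight ℂ Uᴴ : Module.End ℂ (MatC n))

theorem map_ringInverse {M₀ N₀ F : Type*} [MonoidWithZero M₀] [MonoidWithZero N₀]
    [EquivLike F M₀ N₀] [MulEquivClass F M₀ N₀] (f : F) (a : M₀) :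
    f (Ring.inverse a) = Ring.inverse (f a) := by
  by_cases ha : IsUnit a
  · obtain ⟨u, rfl⟩ := ha
    simpa using (Ring.inverse_unit (Units.map (f : M₀ →* N₀) u)).symm
  · rw [Ring.inverse_non_unit _ ha, Ring.inverse_non_unit _ ((isUnit_map_iff f a).not.mpr ha),
      map_zero]

section

variable {n : ℕ}

theorem qRes_map (f : Module.End ℂ (MatC n) ≃ₐ[ℂ] Module.End ℂ (MatC n))
    (φ : Module.End ℂ (MatC n)) (t : ℝ) : qRes (f φ) t = f (qRes φ t) := by
  simp only [qRes, map_mul, map_ringInverse, map_add, map_one, map_smul]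

theorem noNegEig_map_iff (f : Module.End ℂ (MatC n) ≃ₐ[ℂ] Module.End ℂ (MatC n))
    (φ : Module.End ℂ (MatC n)) : NoNegEig (f φ) ↔ NoNegEig φ := by
  simp only [NoNegEig, Module.End.hasEigenvalue_iff_mem_spectrum, AlgEquiv.spectrum_eq]

theorem conjEnd_apply (U : MatC n) (φ : Module.End ℂ (MatC n)) (A : MatC n) :
    conjEnd U φ A = Uᴴ * φ (U * A * Uᴴ) * U := by
  simp [conjEnd, mul_assoc]

theorem IsCP.conjEnd {φ : Module.End ℂ (MatC n)} (h : IsCP φ) (U : MatC n) :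
    IsCP (conjEnd U φ) := by
  intro m A f
  refine (h m (fun i => A i * Uᴴ) (fun j => U *ᵥ f j)).trans_eq
    (Finset.sum_congr rfl fun i _ => Finset.sum_congr rfl fun j _ => ?_)
  rw [conjEnd_apply, ← mulVec_mulVec, ← mulVec_mulVec,
    dotProduct_mulVec (star (f i)) Uᴴ, ← star_mulVec]
  simp [conjTranspose_mul, mul_assoc]

noncomputable def conjEndAlgEquiv (u : unitaryGroup (Fin n) ℂ) :
    Module.End ℂ (MatC n) ≃ₐ[ℂ] Module.End ℂ (MatC n) :=
  (Unitary.conjStarAlgAut ℂ (MatC n) (star u)).toAlgEquiv.toLinearEquiv.conjAlgEquiv ℂ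

theorem coe_conjEndAlgEquiv (u : unitaryGroup (Fin n) ℂ) :
    ⇑(conjEndAlgEquiv u) = conjEnd (u : MatC n) := by
  ext φ A : 2
  simp [conjEndAlgEquiv, conjEnd, mul_assoc, star_eq_conjTranspose]

theorem conjEndAlgEquiv_symm (u : unitaryGroup (Fin n) ℂ) :
    (conjEndAlgEquiv u).symm = conjEndAlgEquiv (star u) := by
  ext φ A : 2
  simp [conjEndAlgEquiv, LinearEquiv.symm_conjAlgEquiv]

section unitary
variable (u : unitaryGroup (Fin n) ℂ)

theorem isCP_conjEndAlgEquiv_iff {φ : Module.End ℂ (MatC n)} :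
    IsCP (conjEndAlgEquiv u φ) ↔ IsCP φ := by
  refine ⟨fun h => ?_, fun h => coe_conjEndAlgEquiv u ▸ h.conjEnd u⟩
  have h' := h.conjEnd ((star u : unitaryGroup (Fin n) ℂ) : MatC n)
  rwa [← coe_conjEndAlgEquiv, ← conjEndAlgEquiv_symm, AlgEquiv.symm_apply_apply] at h'

theorem isQPos_conjEndAlgEquiv_iff {φ : Module.End ℂ (MatC n)} :
    IsQPos (conjEndAlgEquiv u φ) ↔ IsQPos φ := by
  simp only [IsQPos, noNegEig_map_iff, qRes_map, isCP_conjEndAlgEquiv_iff]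

theorem qLE_conjEndAlgEquiv_iff {ψ φ : Module.End ℂ (MatC n)} :
    qLE (conjEndAlgEquiv u ψ) (conjEndAlgEquiv u φ) ↔ qLE ψ φ := by
  simp only [qLE, qRes_map, ← map_sub, isCP_conjEndAlgEquiv_iff]

theorem isQPure_conjEndAlgEquiv_iff {φ : Module.End ℂ (MatC n)} :
    IsQPure (conjEndAlgEquiv u φ) ↔ IsQPure φ := by
  rw [IsQPure, IsQPure, isQPos_conjEndAlgEquiv_iff, (conjEndAlgEquiv u).surjective.forall]
  simp only [isQPos_conjEndAlgEquiv_iff, qLE_conjEndAlgEquiv_iff, qRes_map,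
    map_eq_zero_iff _ (conjEndAlgEquiv u).injective, (conjEndAlgEquiv u).injective.eq_iff]

end unitary

end

/-- For q-positive `φ` and unitary `U`, `φ_U` is q-positive, `β ↦ β_U` is an order
isomorphism between q-subordinates of `φ` and of `φ_U`, and `φ` is q-pure iff `φ_U` is. -/
theorem stmt6 {n : ℕ} (φ : Module.End ℂ (MatC n)) (hφ : IsQPos φ)
    (U : MatC n) (hU : U ∈ Matrix.unitaryGroup (Fin n) ℂ) :
    IsQPos (conjEnd U φ) ∧
    (∀ β : Module.End ℂ (MatC n),
      (IsQPos β ∧ qLE β φ) ↔ (IsQPos (conjEnd U β) ∧ qLE (conjEnd U β) (conjEnd U φ))) ∧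
    (∀ β γ : Module.End ℂ (MatC n), IsQPos β → qLE β φ → IsQPos γ → qLE γ φ →
      (qLE γ β ↔ qLE (conjEnd U γ) (conjEnd U β))) ∧
    (IsQPure φ ↔ IsQPure (conjEnd U φ)) := by
  let u : unitaryGroup (Fin n) ℂ := ⟨U, hU⟩
  rw [show conjEnd U = conjEndAlgEquiv u from (coe_conjEndAlgEquiv u).symm]
  simpa only [isQPos_conjEndAlgEquiv_iff, qLE_conjEndAlgEquiv_iff, isQPure_conjEndAlgEquiv_iff,
    iff_self, implies_true, and_true] using hφ
end

section
/- If φ: Mₙ(ℂ) → Mₙ(ℂ) is an invertible unital q-positive map, then φ⁻¹ is conditionally negative. -/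
open scoped ComplexOrder BigOperators
open Matrix

/-- `ψ` is self-adjoint as a map: `ψ(A*) = ψ(A)*`. -/
def SelfAdjMap {n : ℕ} (ψ : Module.End ℂ (MatC n)) : Prop := ∀ A : MatC n, ψ Aᴴ = (ψ A)ᴴ

/-- Conditionally negative map on `Mₙ(ℂ)`. -/
def IsCondNeg {n : ℕ} (ψ : Module.End ℂ (MatC n)) : Prop :=
  SelfAdjMap ψ ∧
  ∀ (m : ℕ) (A : Fin m → MatC n) (f : Fin m → (Fin n → ℂ)),
    (∑ i, (A i) *ᵥ f i) = 0 →
    ∑ i, ∑ j, star (f i) ⬝ᵥ ((ψ ((A i)ᴴ * A j)) *ᵥ f j) ≤ 0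

/-!
Put `u = 1 + t φ`, invertible for `t ≥ 0` since `φ` has no negative eigenvalues. From `ψ φ = 1`,
`ψ = ψ u⁻¹ + t - t² φ u⁻¹`. When `∑ Aᵢ fᵢ = 0`, the form `χ ↦ ∑ ⟨fᵢ, χ (Aᵢ* Aⱼ) fⱼ⟩` vanishes at
the identity and is nonnegative at `φ u⁻¹ = φ^(t)`, so its value at `ψ` is at most its value at
`ψ u⁻¹ = t⁻¹ ψ (1 + t⁻¹ ψ)⁻¹ ψ`, which tends to `0` as `t → ∞`. Self-adjointness of `ψ` is inherited
from the completely positive map `φ = φ^(0)`.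
-/

open Filter Topology

section RingInverse

variable {R : Type*} [Ring R] {𝕜 : Type*} [Field 𝕜] [Algebra 𝕜 R]

theorem eq_mul_ringInverse_one_add_smul {φ ψ : R} (h : ψ * φ = 1) (c : 𝕜)
    (hu : IsUnit (1 + c • φ)) :
    ψ = ψ * Ring.inverse (1 + c • φ) + c • 1 - c ^ 2 • (φ * Ring.inverse (1 + c • φ)) := by
  set v := Ring.inverse (1 + c • φ)
  have hv : v = 1 - c • (φ * v) := by
    refine eq_sub_of_add_eq ?_
    simpa only [add_mul, one_mul, smul_mul_assoc] using Ring.mul_inverse_cancel _ hu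
  calc ψ = ψ * (1 + c • φ) * v := (Ring.mul_inverse_cancel_right _ _ hu).symm
    _ = ψ * v + c • v := by
      rw [mul_add, mul_one, mul_smul_comm, h, add_mul, smul_mul_assoc, one_mul]
    _ = _ := by
      nth_rewrite 2 [hv]
      module

theorem ringInverse_one_add_smul_of_mul_eq_one {φ ψ : R} (h₁ : φ * ψ = 1) (h₂ : ψ * φ = 1)
    {c : 𝕜} (hc : c ≠ 0) :
    Ring.inverse (1 + c • φ) = c⁻¹ • (Ring.inverse (1 + c⁻¹ • ψ) * ψ) := by
  let u : Rˣ := ⟨c • φ, c⁻¹ • ψ, by simp [h₁, hc], by simp [h₂, hc]⟩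
  have : 1 + c • φ = u * (1 + c⁻¹ • ψ) := by
    simp only [u, mul_add, mul_one, smul_mul_smul_comm, h₁, mul_inv_cancel₀ hc, one_smul, add_comm]
  rw [this, Ring.inverse_mul (.inl u.isUnit), Ring.inverse_unit]
  exact mul_smul_comm _ _ _

end RingInverse

theorem map_ringInverse_s8 {M N F : Type*} [MonoidWithZero M] [MonoidWithZero N] [EquivLike F M N]
    [MulEquivClass F M N] (e : F) (x : M) : e (Ring.inverse x) = Ring.inverse (e x) := by
  by_cases hx : IsUnit x
  · obtain ⟨u, rfl⟩ := hx
    have : e u = Units.map (e : M →* N) u := rfl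
    rw [Ring.inverse_unit, this, Ring.inverse_unit, ← map_inv, Units.coe_map]
    rfl
  · rw [Ring.inverse_non_unit x hx, Ring.inverse_non_unit _ (by simpa using hx), map_zero]

theorem tendsto_mul_ringInverse_one_add_smul {R : Type*} [NormedRing R] [NormedAlgebra ℂ R]
    [CompleteSpace R] {φ ψ : R} (h₁ : φ * ψ = 1) (h₂ : ψ * φ = 1) :
    Tendsto (fun t : ℝ => ψ * Ring.inverse (1 + (t : ℂ) • φ)) atTop (𝓝 0) := by
  have hinv : ContinuousAt (fun s : ℝ => Ring.inverse (1 + (s : ℂ) • ψ)) 0 :=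
    (NormedRing.inverse_continuousAt (1 : Rˣ)).comp_of_eq (by fun_prop) (by simp)
  have hlim : Tendsto (fun s : ℝ => (s : ℂ) • (ψ * Ring.inverse (1 + (s : ℂ) • ψ) * ψ))
      (𝓝 0) (𝓝 0) := by
    simpa using (Complex.continuous_ofReal.tendsto 0).smul
      ((tendsto_const_nhds.mul hinv.tendsto).mul (tendsto_const_nhds (x := ψ)))
  refine (hlim.comp tendsto_inv_atTop_zero).congr' ?_
  filter_upwards [eventually_gt_atTop 0] with t ht
  rw [Function.comp_apply, ringInverse_one_add_smul_of_mul_eq_one h₁ h₂ (by exact_mod_cast ht.ne'),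
    mul_smul_comm, mul_assoc]
  simp only [Complex.ofReal_inv]

theorem Module.End.tendsto_map_mul_ringInverse_one_add_smul {E : Type*} [NormedAddCommGroup E]
    [NormedSpace ℂ E] [FiniteDimensional ℂ E] {φ ψ : Module.End ℂ E} (h₁ : φ * ψ = 1)
    (h₂ : ψ * φ = 1) (L : Module.End ℂ E →ₗ[ℂ] ℂ) :
    Tendsto (fun t : ℝ => L (ψ * Ring.inverse (1 + (t : ℂ) • φ))) atTop (𝓝 0) := by
  let e := Module.End.toContinuousLinearMap (𝕜 := ℂ) E
  have hL : Continuous (L ∘ₗ e.symm.toLinearMap) := LinearMap.continuous_of_finiteDimensional _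
  have hlim := _root_.tendsto_mul_ringInverse_one_add_smul (φ := e φ) (ψ := e ψ)
    (by rw [← map_mul, h₁, map_one]) (by rw [← map_mul, h₂, map_one])
  refine (map_zero (L ∘ₗ e.symm.toLinearMap) ▸ (hL.tendsto 0).comp hlim).congr fun t => ?_
  rw [Function.comp_apply, ← map_one e, ← map_smul, ← map_add, ← map_ringInverse_s8, ← map_mul]
  simp

section MatC

variable {n : ℕ}

def cpSum {m : ℕ} (A : Fin m → MatC n) (f : Fin m → Fin n → ℂ) :
    Module.End ℂ (MatC n) →ₗ[ℂ] ℂ where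
  toFun χ := ∑ i, ∑ j, star (f i) ⬝ᵥ (χ ((A i)ᴴ * A j) *ᵥ f j)
  map_add' χ χ' := by
    simp only [LinearMap.add_apply, Matrix.add_mulVec, dotProduct_add, Finset.sum_add_distrib]
  map_smul' c χ := by
    simp only [LinearMap.smul_apply, Matrix.smul_mulVec, dotProduct_smul, smul_eq_mul,
      Finset.mul_sum, RingHom.id_apply]

@[simp]
theorem cpSum_apply {m : ℕ} (A : Fin m → MatC n) (f : Fin m → Fin n → ℂ)
    (χ : Module.End ℂ (MatC n)) :
    cpSum A f χ = ∑ i, ∑ j, star (f i) ⬝ᵥ (χ ((A i)ᴴ * A j) *ᵥ f j) :=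
  rfl

theorem cpSum_one {m : ℕ} (A : Fin m → MatC n) (f : Fin m → Fin n → ℂ) :
    cpSum A f 1 = star (∑ i, A i *ᵥ f i) ⬝ᵥ ∑ i, A i *ᵥ f i := by
  rw [cpSum_apply, star_sum, sum_dotProduct]
  simp only [dotProduct_sum]
  refine Finset.sum_congr rfl fun i _ => Finset.sum_congr rfl fun j _ => ?_
  rw [Module.End.one_apply, ← mulVec_mulVec, dotProduct_mulVec, ← star_mulVec]

theorem IsCP.im_add_eq_zero {φ : Module.End ℂ (MatC n)} (h : IsCP φ) (A B : MatC n)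
    (f g : Fin n → ℂ) :
    (star f ⬝ᵥ (φ (Aᴴ * B) *ᵥ g) + star g ⬝ᵥ (φ (Bᴴ * A) *ᵥ f)).im = 0 := by
  have hAB := Complex.nonneg_iff.mp (h 2 ![A, B] ![f, g])
  have hA := Complex.nonneg_iff.mp (h 1 ![A] ![f])
  have hB := Complex.nonneg_iff.mp (h 1 ![B] ![g])
  simp only [Fin.sum_univ_two, Fin.sum_univ_one, cons_val_zero, cons_val_one, cons_val_fin_one,
    Complex.add_im] at hAB hA hB
  rw [Complex.add_im]
  linarith [hAB.2, hA.2, hB.2]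

theorem IsCP.selfAdjMap {φ : Module.End ℂ (MatC n)} (h : IsCP φ) : SelfAdjMap φ := by
  intro A
  ext i j
  have h₁ := h.im_add_eq_zero A 1 (Pi.single i 1) (Pi.single j 1)
  have h₂ := h.im_add_eq_zero A 1 (Pi.single i 1) (Pi.single j Complex.I)
  simp only [Pi.star_single, star_one, mulVec_single, single_dotProduct, conjTranspose_one,
    one_mul, mul_one, MulOpposite.op_one, one_smul, op_smul_eq_smul, dotProduct_smul, smul_eq_mul,
    col_apply, RCLike.star_def, Complex.conj_I, neg_mul, Complex.add_im, Complex.mul_im,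
    Complex.neg_im, Complex.I_re, Complex.I_im, zero_mul, zero_add] at h₁ h₂
  refine Complex.ext ?_ ?_ <;>
    simp only [conjTranspose_apply, RCLike.star_def, Complex.conj_re, Complex.conj_im] <;> linarith

theorem SelfAdjMap.inverse {φ ψ : Module.End ℂ (MatC n)} (hφ : SelfAdjMap φ) (h₁ : φ * ψ = 1)
    (h₂ : ψ * φ = 1) : SelfAdjMap ψ := fun A =>
  calc ψ Aᴴ = ψ (φ (ψ A))ᴴ := by rw [← Module.End.mul_apply, h₁, Module.End.one_apply]
    _ = (ψ A)ᴴ := by rw [← hφ, ← Module.End.mul_apply, h₂, Module.End.one_apply]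

theorem qRes_zero (φ : Module.End ℂ (MatC n)) : qRes φ 0 = φ := by
  simp [qRes]

theorem NoNegEig.isUnit_one_add_smul {φ : Module.End ℂ (MatC n)} (h : NoNegEig φ) {t : ℝ}
    (ht : 0 ≤ t) : IsUnit (1 + (t : ℂ) • φ) := by
  rcases ht.eq_or_lt with rfl | ht
  · simp
  have ht₀ : (t : ℂ) ≠ 0 := by exact_mod_cast ht.ne'
  have hunit : IsUnit (algebraMap ℂ _ (-(t : ℂ)⁻¹) - φ) := by
    refine spectrum.notMem_iff.mp fun hmem => h (-t⁻¹) (by simpa using ht) ?_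
    exact_mod_cast Module.End.hasEigenvalue_iff_mem_spectrum.mpr hmem
  have : 1 + (t : ℂ) • φ = algebraMap ℂ _ (-t) * (algebraMap ℂ _ (-(t : ℂ)⁻¹) - φ) := by
    rw [mul_sub, ← map_mul, ← Algebra.smul_def, neg_mul_neg, mul_inv_cancel₀ ht₀, map_one,
      neg_smul, sub_neg_eq_add]
  rw [this]
  exact ((isUnit_iff_ne_zero.mpr (neg_ne_zero.mpr ht₀)).map _).mul hunit

theorem IsQPos.cpSum_le_cpSum_mul_ringInverse {φ ψ : Module.End ℂ (MatC n)} (hq : IsQPos φ)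
    (h : ψ * φ = 1) {m : ℕ} {A : Fin m → MatC n} {f : Fin m → Fin n → ℂ}
    (hsum : ∑ i, A i *ᵥ f i = 0) {t : ℝ} (ht : 0 ≤ t) :
    cpSum A f ψ ≤ cpSum A f (ψ * Ring.inverse (1 + (t : ℂ) • φ)) := by
  have hdecomp := congrArg (cpSum A f)
    (eq_mul_ringInverse_one_add_smul h (t : ℂ) (hq.1.isUnit_one_add_smul ht))
  rw [map_sub, map_add, map_smul, map_smul, cpSum_one, hsum, dotProduct_zero, smul_zero,
    add_zero] at hdecomp
  have hres : 0 ≤ cpSum A f (qRes φ t) := hq.2 t ht m A f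
  rw [hdecomp, sub_le_self_iff, smul_eq_mul]
  exact mul_nonneg (by exact_mod_cast sq_nonneg t) hres

theorem tendsto_cpSum_mul_ringInverse {φ ψ : Module.End ℂ (MatC n)} (h₁ : φ * ψ = 1)
    (h₂ : ψ * φ = 1) {m : ℕ} (A : Fin m → MatC n) (f : Fin m → Fin n → ℂ) :
    Tendsto (fun t : ℝ => cpSum A f (ψ * Ring.inverse (1 + (t : ℂ) • φ))) atTop (𝓝 0) := by
  let _ : NormedAddCommGroup (MatC n) := Matrix.normedAddCommGroup
  let _ : NormedSpace ℂ (MatC n) := Matrix.normedSpace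
  exact Module.End.tendsto_map_mul_ringInverse_one_add_smul h₁ h₂ _

end MatC

theorem stmt8_general {n : ℕ} (φ ψ : Module.End ℂ (MatC n))
    (hinv : φ * ψ = 1 ∧ ψ * φ = 1) (hq : IsQPos φ) :
    IsCondNeg ψ := by
  obtain ⟨h₁, h₂⟩ := hinv
  have hcp : IsCP φ := qRes_zero φ ▸ hq.2 0 le_rfl
  refine ⟨hcp.selfAdjMap.inverse h₁ h₂, fun m A f hsum => ?_⟩
  exact ge_of_tendsto (tendsto_cpSum_mul_ringInverse h₁ h₂ A f)
    ((eventually_ge_atTop 0).mono fun t ht => hq.cpSum_le_cpSum_mul_ringInverse h₂ hsum ht)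

/-- The inverse of an invertible unital q-positive map is conditionally negative. -/
theorem stmt8 {n : ℕ} (φ ψ : Module.End ℂ (MatC n))
    (hinv : φ * ψ = 1 ∧ ψ * φ = 1) (hone : φ 1 = 1) (hq : IsQPos φ) :
    IsCondNeg ψ :=
  stmt8_general φ ψ hinv hq
end
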